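/- arXiv:1805.08477 — 4 statements merged into one kernel-verified Lean document; each statement's English description precedes it below -/
import Mathlib

section
/- Let S : ℝ≥0 → (bounded functions → bounded functions) satisfy the monotone semigroup-type relations: S(a)∘S(b)=S(a+b) for a,b of the same sign, S(c)∘S(-c) ≤ Id ≤ S(-c)∘S(c) for c ≥ 0, and each S(a) is order-preserving. Then for all γ ≥ 0 and a,b ∈ ℝ, S(a+γ)∘S(b-γ) ≤ S(a)∘S(b). -/
/-- A function `ℝᵈ → ℝ` (or more generally `α → ℝ`) is bounded. -/
def IsBddFun {α : Type*} (u : α → ℝ) : Prop := ∃ M, ∀ x, |u x| ≤ M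

theorem stmt_4 {α : Type*}
    (S : ℝ → (α → ℝ) → α → ℝ)
    (hbdd : ∀ a u, IsBddFun u → IsBddFun (S a u))
    (hmono : ∀ a (u v : α → ℝ), IsBddFun u → IsBddFun v → (∀ x, u x ≤ v x) →
      ∀ x, S a u x ≤ S a v x)
    (hsemi : ∀ a b : ℝ, (0 ≤ a ∧ 0 ≤ b) ∨ (a ≤ 0 ∧ b ≤ 0) →
      ∀ u, IsBddFun u → ∀ x, S a (S b u) x = S (a + b) u x)
    (hid : ∀ c : ℝ, 0 ≤ c → ∀ u, IsBddFun u →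
      ∀ x, S c (S (-c) u) x ≤ u x ∧ u x ≤ S (-c) (S c u) x) :
    ∀ γ : ℝ, 0 ≤ γ → ∀ a b : ℝ, ∀ u, IsBddFun u →
      ∀ x, S (a + γ) (S (b - γ) u) x ≤ S a (S b u) x := by
  intro γ hγ a b u hu x
  have hub : IsBddFun (S b u) := hbdd b u hu
  -- Claim 1: S (b - γ) u ≤ S (-γ) (S b u)
  have claim1 : ∀ y, S (b - γ) u y ≤ S (-γ) (S b u) y := by
    rcases le_total b 0 with hb | hb
    · intro y
      have h := hsemi (-γ) b (Or.inr ⟨by linarith, hb⟩) u hu y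
      rw [show -γ + b = b - γ by ring] at h
      rw [← h]
    · rcases le_total γ b with hgb | hgb
      · -- b ≥ γ ≥ 0, so b - γ ≥ 0
        have hw : IsBddFun (S (b - γ) u) := hbdd _ u hu
        have hfun : S b u = S γ (S (b - γ) u) := by
          funext y
          rw [hsemi γ (b - γ) (Or.inl ⟨hγ, by linarith⟩) u hu y,
            show γ + (b - γ) = b by ring]
        intro y
        rw [hfun]
        exact (hid γ hγ (S (b - γ) u) hw y).2
      · -- 0 ≤ b ≤ γ, so b - γ ≤ 0
        intro y
        have h := hsemi (b - γ) (-b) (Or.inr ⟨by linarith, by linarith⟩)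
          (S b u) hub y
        rw [show b - γ + -b = -γ by ring] at h
        rw [← h]
        have hmb : IsBddFun (S (-b) (S b u)) := hbdd _ _ hub
        exact hmono (b - γ) u (S (-b) (S b u)) hu hmb
          (fun z => (hid b hb u hu z).2) y
  -- Claim 2: S (a + γ) (S (-γ) v) ≤ S a v for bounded v
  have claim2 : ∀ v, IsBddFun v → ∀ y, S (a + γ) (S (-γ) v) y ≤ S a v y := by
    intro v hv
    rcases le_total 0 a with ha | ha
    · intro y
      have hgv : IsBddFun (S (-γ) v) := hbdd _ _ hv
      have h := hsemi a γ (Or.inl ⟨ha, hγ⟩) (S (-γ) v) hgv y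
      rw [← h]
      have hggv : IsBddFun (S γ (S (-γ) v)) := hbdd _ _ hgv
      exact hmono a (S γ (S (-γ) v)) v hggv hv
        (fun z => (hid γ hγ v hv z).1) y
    · rcases le_total 0 (a + γ) with hag | hag
      · -- a ≤ 0 ≤ a + γ
        have hfun : S (-γ) v = S (-(a + γ)) (S a v) := by
          funext y
          rw [hsemi (-(a + γ)) a (Or.inr ⟨by linarith, ha⟩) v hv y,
            show -(a + γ) + a = -γ by ring]
        intro y
        rw [hfun]
        exact (hid (a + γ) hag (S a v) (hbdd _ _ hv) y).1
      · -- a + γ ≤ 0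
        intro y
        have h := hsemi (a + γ) (-γ) (Or.inr ⟨hag, by linarith⟩) v hv y
        rw [show a + γ + -γ = a by ring] at h
        rw [h]
  calc S (a + γ) (S (b - γ) u) x
      ≤ S (a + γ) (S (-γ) (S b u)) x :=
        hmono (a + γ) _ _ (hbdd _ _ hu) (hbdd _ _ hub) claim1 x
    _ ≤ S a (S b u) x := claim2 (S b u) hub x
end

section
/- Under the same abstract hypotheses on the family S(t) (order-preserving, semigroup on same-sign increments, S(c)∘S(-c) ≤ Id ≤ S(-c)∘S(c)), if ξ, ζ are piecewise linear paths on [0,T] with ξ(0)=ζ(0), ξ(T)=ζ(T) and ξ ≤ ζ on [0,T], then the composed operator S^ξ(0,T) := S(ξ_{t_{N-1},t_N})∘⋯∘S(ξ_{t_0,t_1}) satisfies S^ξ(0,T) ≤ S^ζ(0,T). -/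
/-- The composed operator `S^ξ(0,t_n) = S(ξ_{t_{n-1},t_n}) ∘ ⋯ ∘ S(ξ_{t_0,t_1})`
along the increments of a path `ξ` over the partition points `t 0, …, t n`. -/
def compOp {α : Type*} (S : ℝ → (α → ℝ) → α → ℝ) (ξ : ℝ → ℝ) (t : ℕ → ℝ) :
    ℕ → (α → ℝ) → α → ℝ
  | 0 => fun u => u
  | n + 1 => fun u => S (ξ (t (n + 1)) - ξ (t n)) (compOp S ξ t n u)

section Aux
variable {α : Type*} (S : ℝ → (α → ℝ) → α → ℝ)

/-- composition along a sequence of values -/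
def cmpAux (f : ℕ → ℝ) : ℕ → (α → ℝ) → α → ℝ
  | 0 => fun u => u
  | n + 1 => fun u => S (f (n + 1) - f n) (cmpAux f n u)

lemma cmpAux_eq_compOp (ξ : ℝ → ℝ) (t : ℕ → ℝ) (n : ℕ) (u : α → ℝ) :
    cmpAux S (fun i => ξ (t i)) n u = compOp S ξ t n u := by
  induction n with
  | zero => rfl
  | succ n ih => simp [cmpAux, compOp, ih]

lemma cmpAux_bdd (hbdd : ∀ a u, IsBddFun u → IsBddFun (S a u)) (f : ℕ → ℝ) (n : ℕ) (u : α → ℝ) (hu : IsBddFun u) :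
    IsBddFun (cmpAux S f n u) := by
  induction n with
  | zero => exact hu
  | succ n ih => exact hbdd _ _ ih

lemma cmpAux_congr (f g : ℕ → ℝ) (n : ℕ) (h : ∀ i ≤ n, f i = g i) (u : α → ℝ) :
    cmpAux S f n u = cmpAux S g n u := by
  induction n with
  | zero => rfl
  | succ n ih =>
    simp only [cmpAux]
    rw [ih (fun i hi => h i (hi.trans (Nat.le_succ n))), h n (Nat.le_succ n),
      h (n+1) le_rfl]


/-- Lemma A : `S(a+γ) ≤ S(a) ∘ S(γ)` for `γ ≥ 0`. -/
lemma lemA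
    (hbdd : ∀ a u, IsBddFun u → IsBddFun (S a u))
    (hmono : ∀ a (u v : α → ℝ), IsBddFun u → IsBddFun v → (∀ x, u x ≤ v x) →
      ∀ x, S a u x ≤ S a v x)
    (hsemi : ∀ a b : ℝ, (0 ≤ a ∧ 0 ≤ b) ∨ (a ≤ 0 ∧ b ≤ 0) →
      ∀ u, IsBddFun u → ∀ x, S a (S b u) x = S (a + b) u x)
    (hid : ∀ c : ℝ, 0 ≤ c → ∀ u, IsBddFun u →
      ∀ x, S c (S (-c) u) x ≤ u x ∧ u x ≤ S (-c) (S c u) x)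
    (γ : ℝ) (hγ : 0 ≤ γ) (a : ℝ) (u : α → ℝ) (hu : IsBddFun u) (x : α) :
    S (a + γ) u x ≤ S a (S γ u) x := by
  rcases le_total 0 a with ha | ha
  · exact le_of_eq (hsemi a γ (Or.inl ⟨ha, hγ⟩) u hu x).symm
  · rcases le_total 0 (a + γ) with hag | hag
    · have e : S (-a) (S (a + γ) u) = S γ u := by
        funext y
        rw [hsemi (-a) (a+γ) (Or.inl ⟨by linarith, hag⟩) u hu y]
        ring_nf
      have h := (hid (-a) (by linarith) (S (a + γ) u) (hbdd _ _ hu) x).2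
      rw [neg_neg] at h
      rw [e] at h
      exact h
    · have h1 : ∀ y, u y ≤ S (-γ) (S γ u) y := fun y => (hid γ hγ u hu y).2
      have h2 := hmono (a + γ) u (S (-γ) (S γ u)) hu (hbdd _ _ (hbdd _ _ hu)) h1 x
      have e := hsemi (a + γ) (-γ) (Or.inr ⟨hag, by linarith⟩) (S γ u) (hbdd _ _ hu) x
      have : a + γ + -γ = a := by ring
      rw [this] at e
      linarith [h2, e.le]

/-- Lemma B : `S(b-γ) ≤ S(-γ) ∘ S(b)` for `γ ≥ 0`. -/
lemma lemB
    (hbdd : ∀ a u, IsBddFun u → IsBddFun (S a u))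
    (hmono : ∀ a (u v : α → ℝ), IsBddFun u → IsBddFun v → (∀ x, u x ≤ v x) →
      ∀ x, S a u x ≤ S a v x)
    (hsemi : ∀ a b : ℝ, (0 ≤ a ∧ 0 ≤ b) ∨ (a ≤ 0 ∧ b ≤ 0) →
      ∀ u, IsBddFun u → ∀ x, S a (S b u) x = S (a + b) u x)
    (hid : ∀ c : ℝ, 0 ≤ c → ∀ u, IsBddFun u →
      ∀ x, S c (S (-c) u) x ≤ u x ∧ u x ≤ S (-c) (S c u) x)
    (γ : ℝ) (hγ : 0 ≤ γ) (b : ℝ) (u : α → ℝ) (hu : IsBddFun u) (x : α) :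
    S (b - γ) u x ≤ S (-γ) (S b u) x := by
  rcases le_total b 0 with hb | hb
  · have e := hsemi (-γ) b (Or.inr ⟨by linarith, hb⟩) u hu x
    have : -γ + b = b - γ := by ring
    rw [this] at e
    exact e.ge
  · rcases le_total γ b with hgb | hgb
    · have e : S γ (S (b - γ) u) = S b u := by
        funext y
        rw [hsemi γ (b - γ) (Or.inl ⟨hγ, by linarith⟩) u hu y]
        ring_nf
      have h := (hid γ hγ (S (b - γ) u) (hbdd _ _ hu) x).2
      rw [e] at h
      exact h
    · have h1 : ∀ y, u y ≤ S (-b) (S b u) y := fun y => (hid b hb u hu y).2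
      have h2 := hmono (b - γ) u (S (-b) (S b u)) hu (hbdd _ _ (hbdd _ _ hu)) h1 x
      have e := hsemi (b - γ) (-b) (Or.inr ⟨by linarith, by linarith⟩) (S b u) (hbdd _ _ hu) x
      have : b - γ + -b = -γ := by ring
      rw [this] at e
      linarith [h2, e.le]

/-- Two-step monotonicity. -/
lemma twostep
    (hbdd : ∀ a u, IsBddFun u → IsBddFun (S a u))
    (hmono : ∀ a (u v : α → ℝ), IsBddFun u → IsBddFun v → (∀ x, u x ≤ v x) →
      ∀ x, S a u x ≤ S a v x)
    (hsemi : ∀ a b : ℝ, (0 ≤ a ∧ 0 ≤ b) ∨ (a ≤ 0 ∧ b ≤ 0) →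
      ∀ u, IsBddFun u → ∀ x, S a (S b u) x = S (a + b) u x)
    (hid : ∀ c : ℝ, 0 ≤ c → ∀ u, IsBddFun u →
      ∀ x, S c (S (-c) u) x ≤ u x ∧ u x ≤ S (-c) (S c u) x)
    (A B a b : ℝ) (hsum : A + B = a + b) (haA : a ≤ A)
    (u : α → ℝ) (hu : IsBddFun u) (x : α) :
    S A (S B u) x ≤ S a (S b u) x := by
  have hγ : 0 ≤ A - a := by linarith
  have hA : A = a + (A - a) := by ring
  have hB : B = b - (A - a) := by linarith
  rw [hA, hB]
  generalize hg : A - a = γ at hγ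
  calc S (a + γ) (S (b - γ) u) x
      ≤ S a (S γ (S (b - γ) u)) x :=
        lemA S hbdd hmono hsemi hid γ hγ a (S (b - γ) u) (hbdd _ _ hu) x
    _ ≤ S a (S b u) x := by
        apply hmono a _ _ (hbdd _ _ (hbdd _ _ hu)) (hbdd _ _ hu)
        intro y
        calc S γ (S (b - γ) u) y
            ≤ S γ (S (-γ) (S b u)) y := by
              apply hmono γ _ _ (hbdd _ _ hu) (hbdd _ _ (hbdd _ _ hu))
              exact lemB S hbdd hmono hsemi hid γ hγ b u hu
          _ ≤ S b u y := (hid γ hγ (S b u) (hbdd _ _ hu) y).1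

/-- Key induction. -/
lemma key
    (hbdd : ∀ a u, IsBddFun u → IsBddFun (S a u))
    (hmono : ∀ a (u v : α → ℝ), IsBddFun u → IsBddFun v → (∀ x, u x ≤ v x) →
      ∀ x, S a u x ≤ S a v x)
    (hsemi : ∀ a b : ℝ, (0 ≤ a ∧ 0 ≤ b) ∨ (a ≤ 0 ∧ b ≤ 0) →
      ∀ u, IsBddFun u → ∀ x, S a (S b u) x = S (a + b) u x)
    (hid : ∀ c : ℝ, 0 ≤ c → ∀ u, IsBddFun u →
      ∀ x, S c (S (-c) u) x ≤ u x ∧ u x ≤ S (-c) (S c u) x)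
    : ∀ n (f g : ℕ → ℝ), f 0 = g 0 → f n = g n → (∀ i ≤ n, f i ≤ g i) →
    ∀ u, IsBddFun u → ∀ x, cmpAux S f n u x ≤ cmpAux S g n u x := by
  intro n
  induction n with
  | zero => intro f g _ _ _ u _ x; exact le_rfl
  | succ n ih =>
    intro f g h0 hn hle u hu x
    cases n with
    | zero =>
      show S (f 1 - f 0) u x ≤ S (g 1 - g 0) u x
      rw [h0, hn]
    | succ m =>
      -- n = m+1, total level m+2
      set f' : ℕ → ℝ := fun i => if i = m + 1 then g (m + 1) else f i with hf'
      have hf'm1 : f' (m + 1) = g (m + 1) := by simp [hf']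
      have hf'low : ∀ i ≤ m, f' i = f i := by
        intro i hi; simp only [hf']; rw [if_neg (by omega)]
      have step1 : cmpAux S f (m + 2) u x ≤
          S (f (m + 2) - g (m + 1)) (S (g (m + 1) - f m) (cmpAux S f m u)) x := by
        show S (f (m + 2) - f (m + 1)) (S (f (m + 1) - f m) (cmpAux S f m u)) x ≤ _
        apply twostep S hbdd hmono hsemi hid _ _ _ _ (by ring)
          (by linarith [hle (m + 1) (by omega)]) _ (cmpAux_bdd S hbdd f m u hu) x
      have eq1 : S (g (m + 1) - f m) (cmpAux S f m u) = cmpAux S f' (m + 1) u := by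
        show _ = S (f' (m + 1) - f' m) (cmpAux S f' m u)
        rw [hf'm1, hf'low m le_rfl,
          cmpAux_congr S f' f m (fun i hi => hf'low i hi) u]
      have ihstep : ∀ y, cmpAux S f' (m + 1) u y ≤ cmpAux S g (m + 1) u y := by
        apply ih f' g _ hf'm1 _ u hu
        · rw [hf'low 0 (by omega)]; exact h0
        · intro i hi
          rcases eq_or_ne i (m + 1) with rfl | hne
          · rw [hf'm1]
          · rw [show f' i = f i by simp only [hf']; rw [if_neg hne]]
            exact hle i (by omega)
      have step2 : S (f (m + 2) - g (m + 1)) (cmpAux S f' (m + 1) u) x ≤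
          cmpAux S g (m + 2) u x := by
        show _ ≤ S (g (m + 2) - g (m + 1)) (cmpAux S g (m + 1) u) x
        rw [show f (m + 2) = g (m + 2) from hn]
        exact hmono _ _ _ (cmpAux_bdd S hbdd f' (m + 1) u hu)
          (cmpAux_bdd S hbdd g (m + 1) u hu) ihstep x
      calc cmpAux S f (m + 2) u x
          ≤ S (f (m + 2) - g (m + 1)) (S (g (m + 1) - f m) (cmpAux S f m u)) x := step1
        _ = S (f (m + 2) - g (m + 1)) (cmpAux S f' (m + 1) u) x := by rw [eq1]
        _ ≤ cmpAux S g (m + 2) u x := step2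

end Aux

theorem stmt_5 {α : Type*}
    (S : ℝ → (α → ℝ) → α → ℝ)
    (hbdd : ∀ a u, IsBddFun u → IsBddFun (S a u))
    (hmono : ∀ a (u v : α → ℝ), IsBddFun u → IsBddFun v → (∀ x, u x ≤ v x) →
      ∀ x, S a u x ≤ S a v x)
    (hsemi : ∀ a b : ℝ, (0 ≤ a ∧ 0 ≤ b) ∨ (a ≤ 0 ∧ b ≤ 0) →
      ∀ u, IsBddFun u → ∀ x, S a (S b u) x = S (a + b) u x)
    (hid : ∀ c : ℝ, 0 ≤ c → ∀ u, IsBddFun u →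
      ∀ x, S c (S (-c) u) x ≤ u x ∧ u x ≤ S (-c) (S c u) x)
    (T : ℝ) (hT : 0 < T) (N : ℕ) (t : ℕ → ℝ)
    (ht0 : t 0 = 0) (htN : t N = T) (htmono : ∀ i, t i ≤ t (i + 1))
    (ξ ζ : ℝ → ℝ)
    -- ξ and ζ are piecewise linear with respect to the common partition
    (hξlin : ∀ i < N, ∃ a : ℝ, ∀ s ∈ Set.Icc (t i) (t (i + 1)),
      ξ s = ξ (t i) + a * (s - t i))
    (hζlin : ∀ i < N, ∃ a : ℝ, ∀ s ∈ Set.Icc (t i) (t (i + 1)),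
      ζ s = ζ (t i) + a * (s - t i))
    (h0 : ξ 0 = ζ 0) (hTeq : ξ T = ζ T)
    (hle : ∀ s ∈ Set.Icc (0 : ℝ) T, ξ s ≤ ζ s) :
    ∀ u, IsBddFun u → ∀ x, compOp S ξ t N u x ≤ compOp S ζ t N u x := by
  have hmonot : Monotone t := monotone_nat_of_le_succ htmono
  intro u hu x
  rw [← cmpAux_eq_compOp S ξ t N u, ← cmpAux_eq_compOp S ζ t N u]
  refine key S hbdd hmono hsemi hid N (fun i => ξ (t i)) (fun i => ζ (t i))
    ?_ ?_ ?_ u hu x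
  · simp only [ht0, h0]
  · simp only [htN, hTeq]
  · intro i hi
    refine hle (t i) ⟨?_, ?_⟩
    · rw [← ht0]; exact hmonot (Nat.zero_le i)
    · rw [← htN]; exact hmonot hi
end

section
/- Let B : [0,∞) → ℝ be continuous with B(0)=0, M(t)=sup_{s≤t}B(s), m(t)=inf_{s≤t}B(s), R(t)=M(t)-m(t), θ(a)=inf{t ≥ 0 : R(t)=a}, and S(r)=B(θ(r)). Suppose τ' < τ are two consecutive extrema times in the skeleton construction with B(τ') = m(τ') < 0 and B equal to its running max at θ(r) for r ∈ (R(τ'), R(τ)]. Then for all r in (R(τ'), R(τ)]: S(r) = B(τ') + r, i.e., S jumps by R(τ') at r = R(τ') and is affine with slope 1 on (R(τ'), R(τ)]. -/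
theorem stmt_10 (B : ℝ → ℝ) (hB : Continuous B) (hB0 : B 0 = 0)
    (M m R : ℝ → ℝ) (θ S : ℝ → ℝ)
    (hM : ∀ t, M t = sSup (B '' Set.Icc 0 t))
    (hm : ∀ t, m t = sInf (B '' Set.Icc 0 t))
    (hR : ∀ t, R t = M t - m t)
    (hθ : ∀ a, θ a = sInf {t | 0 ≤ t ∧ R t = a})
    (hS : ∀ r, S r = B (θ r))
    (τ' τ : ℝ) (hτ'0 : 0 ≤ τ') (hττ' : τ' < τ)
    -- `τ'` and `τ` are consecutive skeleton extrema: at `τ'` the running minimum is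
    -- attained and negative, and it is not improved on `[τ', τ]`
    (hmin : B τ' = m τ') (hneg : B τ' < 0)
    (hconst : ∀ t ∈ Set.Icc τ' τ, m t = m τ')
    -- between the extrema the path is at its running maximum at the times `θ(r)`
    (hattain : ∀ r ∈ Set.Ioc (R τ') (R τ), (∃ t, 0 ≤ t ∧ R t = r) ∧ θ r ≤ τ ∧
      B (θ r) = M (θ r)) :
    ∀ r ∈ Set.Ioc (R τ') (R τ), S r = B τ' + r := by
  intro r hr
  obtain ⟨hne, hθτ, hBM⟩ := hattain r hr
  have hbddA : ∀ t : ℝ, BddAbove (B '' Set.Icc 0 t) := fun t =>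
    (isCompact_Icc.image hB).bddAbove
  have hbddB : ∀ t : ℝ, BddBelow (B '' Set.Icc 0 t) := fun t =>
    (isCompact_Icc.image hB).bddBelow
  have hneim : ∀ t : ℝ, 0 ≤ t → (B '' Set.Icc 0 t).Nonempty := fun t ht =>
    (Set.nonempty_Icc.mpr ht).image B
  have hMmono : ∀ s t : ℝ, 0 ≤ s → s ≤ t → M s ≤ M t := by
    intro s t hs hst
    rw [hM, hM]
    exact csSup_le_csSup (hbddA t) (hneim s hs)
      (Set.image_mono (Set.Icc_subset_Icc_right hst))
  have hmmono : ∀ s t : ℝ, 0 ≤ s → s ≤ t → m t ≤ m s := by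
    intro s t hs hst
    rw [hm, hm]
    exact csInf_le_csInf (hbddB t) (hneim s hs)
      (Set.image_mono (Set.Icc_subset_Icc_right hst))
  have hRmono : ∀ s t : ℝ, 0 ≤ s → s ≤ t → R s ≤ R t := by
    intro s t hs hst
    rw [hR, hR]
    have := hMmono s t hs hst
    have := hmmono s t hs hst
    linarith
  have hBleM : ∀ t u : ℝ, 0 ≤ u → u ≤ t → B u ≤ M t := by
    intro t u hu hut
    rw [hM]
    exact le_csSup (hbddA t) ⟨u, ⟨hu, hut⟩, rfl⟩
  have hmleB : ∀ t u : ℝ, 0 ≤ u → u ≤ t → m t ≤ B u := by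
    intro t u hu hut
    rw [hm]
    exact csInf_le (hbddB t) ⟨u, ⟨hu, hut⟩, rfl⟩
  set T : Set ℝ := {t | 0 ≤ t ∧ R t = r} with hT
  have hθr : θ r = sInf T := hθ r
  have hTne : T.Nonempty := by
    obtain ⟨t, ht0, htr⟩ := hne
    exact ⟨t, ht0, htr⟩
  have hTbdd : BddBelow T := ⟨0, fun t ht => ht.1⟩
  have hθ0 : 0 ≤ θ r := by
    rw [hθr]; exact le_csInf hTne fun t ht => ht.1
  have hθleT : ∀ t ∈ T, θ r ≤ t := by
    intro t ht; rw [hθr]; exact csInf_le hTbdd ht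
  have hRθler : R (θ r) ≤ r := by
    obtain ⟨t, ht⟩ := hTne
    have := hRmono (θ r) t hθ0 (hθleT t ht)
    rw [ht.2] at this
    exact this
  have hrleRθ : r ≤ R (θ r) := by
    by_contra h
    push_neg at h
    set ε := (r - R (θ r)) / 3 with hε
    have hεpos : 0 < ε := by simp only [hε]; linarith
    obtain ⟨δ, hδpos, hδ⟩ := Metric.continuous_iff.mp hB (θ r) ε hεpos
    have hlt : sInf T < θ r + δ := by rw [← hθr]; linarith
    obtain ⟨t, htT, htlt⟩ := exists_lt_of_csInf_lt hTne hlt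
    have hθt : θ r ≤ t := hθleT t htT
    have hMt : M t ≤ M (θ r) + ε := by
      rw [hM t]
      apply csSup_le (hneim t htT.1)
      rintro b ⟨u, ⟨hu0, hut⟩, rfl⟩
      by_cases hc : u ≤ θ r
      · have := hBleM (θ r) u hu0 hc
        linarith
      · push_neg at hc
        have hdist : dist u (θ r) < δ := by
          rw [Real.dist_eq, abs_of_pos (by linarith)]
          linarith
        have := hδ u hdist
        rw [Real.dist_eq, abs_lt] at this
        have hBm := hBleM (θ r) (θ r) hθ0 le_rfl
        linarith
    have hmt : m (θ r) - ε ≤ m t := by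
      rw [hm t]
      apply le_csInf (hneim t htT.1)
      rintro b ⟨u, ⟨hu0, hut⟩, rfl⟩
      by_cases hc : u ≤ θ r
      · have := hmleB (θ r) u hu0 hc
        linarith
      · push_neg at hc
        have hdist : dist u (θ r) < δ := by
          rw [Real.dist_eq, abs_of_pos (by linarith)]
          linarith
        have := hδ u hdist
        rw [Real.dist_eq, abs_lt] at this
        have hBm := hmleB (θ r) (θ r) hθ0 le_rfl
        linarith
    have hRt : R t ≤ R (θ r) + 2 * ε := by
      rw [hR, hR] at *
      linarith
    have := htT.2
    simp only [hε] at hRt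
    linarith
  have hRθ : R (θ r) = r := le_antisymm hRθler hrleRθ
  have hτ'θ : τ' ≤ θ r := by
    by_contra h
    push_neg at h
    have := hRmono (θ r) τ' hθ0 h.le
    rw [hRθ] at this
    exact absurd hr.1 (not_lt.mpr this)
  have hmθ : m (θ r) = m τ' := hconst (θ r) ⟨hτ'θ, hθτ⟩
  have hRθ' := hR (θ r)
  rw [hRθ] at hRθ'
  calc S r = B (θ r) := hS r
    _ = M (θ r) := hBM
    _ = m (θ r) + r := by linarith
    _ = B τ' + r := by rw [hmθ, ← hmin]
end

section
/- Let B be continuous with B(0)=0, let (τᵢ)_{i ≤ 0} be the successive extrema times of B on [0,T] (τ₀ the last global extremum, τ_{i-1} the first time of the opposite extremum over [0,τᵢ]), and R(t) = max_{[0,t]}B - min_{[0,t]}B. Then for all i ≤ 0: |B(τᵢ) - B(τ_{i-1})| = R(τᵢ), and consequently R(τ_{i-1}) + |R(τᵢ) - R(τ_{i-1})| = R(τᵢ), i.e., the total variation of the piecewise linear skeleton on [0,τ₀] equals Σ_{i≤0} R(τᵢ). -/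
theorem stmt_11 (T : ℝ) (hT : 0 < T) (B : ℝ → ℝ) (hB : Continuous B) (hB0 : B 0 = 0)
    (R : ℝ → ℝ)
    (hR : ∀ t, R t = sSup (B '' Set.Icc 0 t) - sInf (B '' Set.Icc 0 t))
    -- `τ n` encodes the successive extrema time `τ_{-n}`, with `τ 0 = τ₀` the last global
    -- extremum on `[0,T]`; `τ (n+1)` is the time of the opposite running extremum over `[0, τ n]`
    (τ : ℕ → ℝ) (hτmem : ∀ n, τ n ∈ Set.Icc (0 : ℝ) T)
    (hτmono : ∀ n, τ (n + 1) ≤ τ n)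
    (halt : ∀ n,
      (B (τ n) = sSup (B '' Set.Icc 0 (τ n)) ∧ B (τ (n + 1)) = sInf (B '' Set.Icc 0 (τ n))) ∨
      (B (τ n) = sInf (B '' Set.Icc 0 (τ n)) ∧ B (τ (n + 1)) = sSup (B '' Set.Icc 0 (τ n))))
    (hsum : Summable fun n => R (τ n)) :
    (∀ n, |B (τ n) - B (τ (n + 1))| = R (τ n)) ∧
    (∀ n, R (τ (n + 1)) + |R (τ n) - R (τ (n + 1))| = R (τ n)) ∧
    ∑' n, |B (τ n) - B (τ (n + 1))| = ∑' n, R (τ n) := by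

  have hbddA : ∀ t : ℝ, BddAbove (B '' Set.Icc 0 t) := fun t => (isCompact_Icc.image hB).bddAbove
  have hbddB : ∀ t : ℝ, BddBelow (B '' Set.Icc 0 t) := fun t => (isCompact_Icc.image hB).bddBelow
  have hne : ∀ n, (B '' Set.Icc 0 (τ n)).Nonempty :=
    fun n => ⟨B 0, ⟨0, ⟨le_refl 0, (hτmem n).1⟩, rfl⟩⟩
  have hle : ∀ n, sInf (B '' Set.Icc 0 (τ n)) ≤ sSup (B '' Set.Icc 0 (τ n)) :=
    fun n => csInf_le_csSup (hne n) (hbddB _) (hbddA _)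
  have h1 : ∀ n, |B (τ n) - B (τ (n + 1))| = R (τ n) := by
    intro n
    rw [hR]
    rcases halt n with ⟨ha, hb⟩ | ⟨ha, hb⟩
    · rw [ha, hb, abs_of_nonneg (sub_nonneg.2 (hle n))]
    · rw [ha, hb, abs_of_nonpos (sub_nonpos.2 (hle n))]; ring
  have hmono : ∀ n, R (τ (n + 1)) ≤ R (τ n) := by
    intro n
    rw [hR, hR]
    have hsub : Set.Icc (0:ℝ) (τ (n + 1)) ⊆ Set.Icc 0 (τ n) :=
      Set.Icc_subset_Icc_right (hτmono n)
    have hne' : (B '' Set.Icc 0 (τ (n + 1))).Nonempty :=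
      ⟨B 0, ⟨0, ⟨le_refl 0, (hτmem (n + 1)).1⟩, rfl⟩⟩
    have hs : sSup (B '' Set.Icc 0 (τ (n + 1))) ≤ sSup (B '' Set.Icc 0 (τ n)) :=
      csSup_le_csSup (hbddA _) hne' (Set.image_mono hsub)
    have hi : sInf (B '' Set.Icc 0 (τ n)) ≤ sInf (B '' Set.Icc 0 (τ (n + 1))) :=
      csInf_le_csInf (hbddB _) hne' (Set.image_mono hsub)
    linarith
  refine ⟨h1, fun n => ?_, tsum_congr h1⟩
  rw [abs_of_nonneg (sub_nonneg.2 (hmono n))]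
  ring
end
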